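/- arXiv:1607.08641 — 2 statements merged into one kernel-verified Lean document; each statement's English description precedes it below -/
import Mathlib

section
/- Let H be a reduced, connected, linear hypergraph (every two edges share at most one vertex) in which every vertex has degree at most 2, with at least one edge and every edge of size at least 2. Then I(H) ≤ 2, and I(H) = 1 if and only if H has a vertex of degree 1. -/
/-- A (finite) hypergraph: a vertex set and a set of edges, each edge a subset
of the vertex set. -/
structure FinHypergraph (α : Type*) [DecidableEq α] where
  verts : Finset α
  edges : Finset (Finset α)
  edge_sub : ∀ e ∈ edges, e ⊆ verts

namespace FinHypergraph

variable {α : Type*} [DecidableEq α]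

/-- The `m`-infection closure of an initially infected set `W`: a set `A` of
infected vertices with `m ≤ |A|` can infect an edge `E ⊇ A` provided every
vertex `u` outside `E` such that `A ∪ {u}` is contained in some edge is
already infected; then every vertex of `E` becomes infected. -/
inductive InfectedFromM (H : FinHypergraph α) (m : ℕ) (W : Finset α) : α → Prop
  | init {v : α} (hv : v ∈ W) : InfectedFromM H m W v
  | spread {A E : Finset α} {v : α}
      (hcard : m ≤ A.card) (hAE : A ⊆ E) (hE : E ∈ H.edges)
      (hAinf : ∀ a ∈ A, InfectedFromM H m W a)
      (hblock : ∀ u ∈ H.verts, u ∉ E → (∃ E' ∈ H.edges, A ∪ {u} ⊆ E') →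
        InfectedFromM H m W u)
      (hv : v ∈ E) : InfectedFromM H m W v

/-- `W` is an `m`-infection set if starting from `W` every vertex gets infected. -/
def IsInfectionSetM (H : FinHypergraph α) (m : ℕ) (W : Finset α) : Prop :=
  W ⊆ H.verts ∧ ∀ v ∈ H.verts, InfectedFromM H m W v

/-- The `m`-infection number: minimum size of an `m`-infection set. -/
noncomputable def infectionNumberM (H : FinHypergraph α) (m : ℕ) : ℕ :=
  sInf {n | ∃ W : Finset α, IsInfectionSetM H m W ∧ W.card = n}

/-- Ordinary infection (`m = 1`, i.e. the infecting set is nonempty). -/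
def InfectedFrom (H : FinHypergraph α) : Finset α → α → Prop := InfectedFromM H 1

def IsInfectionSet (H : FinHypergraph α) : Finset α → Prop := IsInfectionSetM H 1

noncomputable def infectionNumber (H : FinHypergraph α) : ℕ := infectionNumberM H 1

/-- The degree of a vertex: the number of edges containing it. -/
def degree (H : FinHypergraph α) (v : α) : ℕ := (H.edges.filter (fun e => v ∈ e)).card

/-- Two vertices are adjacent if some edge contains both. -/
def Adj (H : FinHypergraph α) (u v : α) : Prop := ∃ e ∈ H.edges, u ∈ e ∧ v ∈ e

/-- A hypergraph is connected if any two vertices are joined by a chain of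
adjacencies. -/
def Connected (H : FinHypergraph α) : Prop :=
  ∀ u ∈ H.verts, ∀ v ∈ H.verts, Relation.ReflTransGen H.Adj u v

/-- A hypergraph is reduced if no edge is contained in another edge. -/
def Reduced (H : FinHypergraph α) : Prop :=
  ∀ e ∈ H.edges, ∀ f ∈ H.edges, e ⊆ f → e = f

open Classical in
/-- The connected component of a vertex. -/
noncomputable def component (H : FinHypergraph α) (v : α) : Finset α :=
  H.verts.filter (fun u => Relation.ReflTransGen H.Adj v u)

/-- The sub-hypergraph induced by a vertex set `S`. -/
def restrict (H : FinHypergraph α) (S : Finset α) : FinHypergraph α where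
  verts := H.verts ∩ S
  edges := H.edges.filter (fun e => e ⊆ S)
  edge_sub := fun e he => by
    simp only [Finset.mem_filter] at he
    exact Finset.subset_inter (H.edge_sub e he.1) he.2

end FinHypergraph

/-!
Once an edge is fully infected, infection spreads to every edge meeting it: a shared vertex `c`
lies in at most one other edge `F`, and every vertex outside `F` that `c` sees lies in the
infected edge, so `{c}` infects `F`; connectivity does the rest. Two vertices of an edge infect
it, since by linearity no other edge contains both, and a vertex of degree one infects its
unique edge. Conversely a single vertex `w` of degree two infects nothing: for either edge
`E ∋ w`, the other edge through `w` has a vertex outside `E` (linearity, edges of size `≥ 2`)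
that blocks the infection of `E`.
-/

namespace FinHypergraph

variable {α : Type*} [DecidableEq α] {H : FinHypergraph α}

lemma not_infectedFromM_empty {m : ℕ} (hm : 0 < m) {v : α} : ¬ H.InfectedFromM m ∅ v := by
  intro h
  induction h with
  | init hv => simp at hv
  | spread hcard _ _ _ _ _ ihA =>
    obtain ⟨a, ha⟩ := Finset.card_pos.mp (hm.trans_le hcard)
    exact ihA a ha

lemma infectionNumberM_le_card {m : ℕ} {W : Finset α} (hW : H.IsInfectionSetM m W) :
    H.infectionNumberM m ≤ W.card :=
  Nat.sInf_le ⟨W, hW, rfl⟩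

lemma exists_isInfectionSetM_card_eq {m : ℕ} {W : Finset α} (hW : H.IsInfectionSetM m W) :
    ∃ W' : Finset α, H.IsInfectionSetM m W' ∧ W'.card = H.infectionNumberM m := by
  have : {n | ∃ W' : Finset α, H.IsInfectionSetM m W' ∧ W'.card = n}.Nonempty :=
    ⟨_, W, hW, rfl⟩
  exact Nat.sInf_mem this

lemma infectionNumberM_pos {m : ℕ} (hm : 0 < m) {W : Finset α} (hW : H.IsInfectionSetM m W)
    {v : α} (hv : v ∈ H.verts) : 0 < H.infectionNumberM m := by
  obtain ⟨W', hW', hcard⟩ := exists_isInfectionSetM_card_eq hW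
  rw [← hcard, Finset.card_pos, Finset.nonempty_iff_ne_empty]
  rintro rfl
  exact not_infectedFromM_empty hm (hW'.2 v hv)

lemma eq_of_degree_eq_one {c : α} (hc : H.degree c = 1) {E F : Finset α}
    (hE : E ∈ H.edges) (hF : F ∈ H.edges) (hcE : c ∈ E) (hcF : c ∈ F) : E = F :=
  Finset.card_le_one.mp hc.le E (Finset.mem_filter.mpr ⟨hE, hcE⟩) F
    (Finset.mem_filter.mpr ⟨hF, hcF⟩)

lemma eq_of_degree_le_two {c : α} (hc : H.degree c ≤ 2) {E F G : Finset α}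
    (hE : E ∈ H.edges) (hF : F ∈ H.edges) (hG : G ∈ H.edges)
    (hcE : c ∈ E) (hcF : c ∈ F) (hcG : c ∈ G) (hEF : E ≠ F) (hGF : G ≠ F) : G = E := by
  by_contra hGE
  have hsub : ({E, F, G} : Finset (Finset α)) ⊆ H.edges.filter (c ∈ ·) := by
    simp [Finset.insert_subset_iff, hE, hF, hG, hcE, hcF, hcG]
  have hcard : ({E, F, G} : Finset (Finset α)).card = 3 :=
    Finset.card_eq_three.mpr ⟨E, F, G, hEF, Ne.symm hGE, Ne.symm hGF, rfl⟩
  have := (Finset.card_le_card hsub).trans hc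
  omega

lemma sdiff_nonempty_of_linear
    (hlin : ∀ e ∈ H.edges, ∀ f ∈ H.edges, e ≠ f → (e ∩ f).card ≤ 1)
    (hsize : ∀ e ∈ H.edges, 2 ≤ e.card) {E F : Finset α}
    (hE : E ∈ H.edges) (hF : F ∈ H.edges) (hEF : E ≠ F) : (F \ E).Nonempty := by
  rw [← Finset.card_pos]
  have := Finset.card_inter_add_card_sdiff F E
  have := hlin F hF E hE (Ne.symm hEF)
  have := hsize F hF
  omega

lemma infectedFromM_of_mem_of_forall_edge {W F : Finset α} {c : α} (hF : F ∈ H.edges)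
    (hcF : c ∈ F) (hc : H.InfectedFromM 1 W c)
    (hother : ∀ E ∈ H.edges, E ≠ F → c ∈ E → ∀ x ∈ E, H.InfectedFromM 1 W x) :
    ∀ x ∈ F, H.InfectedFromM 1 W x := by
  intro x hx
  refine .spread (A := {c}) (by simp) (by simpa using hcF) hF (by simpa using hc) ?_ hx
  rintro u - huF ⟨E, hE, hcuE⟩
  rw [Finset.union_subset_iff, Finset.singleton_subset_iff, Finset.singleton_subset_iff] at hcuE
  exact hother E hE (by rintro rfl; exact huF hcuE.2) hcuE.1 u hcuE.2

lemma infectedFromM_of_infected_edge (hconn : H.Connected)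
    (hdeg : ∀ v ∈ H.verts, H.degree v ≤ 2) {W E : Finset α} {u : α}
    (hE : E ∈ H.edges) (huE : u ∈ E) (hEinf : ∀ x ∈ E, H.InfectedFromM 1 W x)
    {v : α} (hv : v ∈ H.verts) : H.InfectedFromM 1 W v := by
  suffices ∃ G ∈ H.edges, v ∈ G ∧ ∀ x ∈ G, H.InfectedFromM 1 W x by
    obtain ⟨G, -, hvG, hGinf⟩ := this
    exact hGinf v hvG
  have huv := hconn u (H.edge_sub E hE huE) v hv
  clear hv
  induction huv with
  | refl => exact ⟨E, hE, huE, hEinf⟩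
  | tail _ hadj ih =>
    obtain ⟨G, hG, hbG, hGinf⟩ := ih
    obtain ⟨F, hF, hbF, hcF⟩ := hadj
    refine ⟨F, hF, hcF, ?_⟩
    by_cases hGF : G = F
    · exact hGF ▸ hGinf
    refine infectedFromM_of_mem_of_forall_edge hF hbF (hGinf _ hbG) fun E' hE' hE'F hbE' => ?_
    rw [eq_of_degree_le_two (hdeg _ (H.edge_sub G hG hbG)) hG hF hE' hbG hbF hbE' hGF hE'F]
    exact hGinf

lemma isInfectionSetM_singleton_of_degree_eq_one (hconn : H.Connected)
    (hdeg : ∀ v ∈ H.verts, H.degree v ≤ 2) {w : α} (hw : w ∈ H.verts)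
    (hdw : H.degree w = 1) :
    H.IsInfectionSetM 1 {w} := by
  obtain ⟨E, hEw⟩ := Finset.card_pos.mp (hdw ▸ Nat.one_pos : 0 < H.degree w)
  obtain ⟨hE, hwE⟩ := Finset.mem_filter.mp hEw
  have hEinf := infectedFromM_of_mem_of_forall_edge hE hwE (.init (Finset.mem_singleton_self w))
    fun E' hE' hE'E hwE' => absurd (eq_of_degree_eq_one hdw hE' hE hwE' hwE) hE'E
  exact ⟨Finset.singleton_subset_iff.mpr hw,
    fun v hv => infectedFromM_of_infected_edge hconn hdeg hE hwE hEinf hv⟩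

lemma isInfectionSetM_pair (hconn : H.Connected)
    (hlin : ∀ e ∈ H.edges, ∀ f ∈ H.edges, e ≠ f → (e ∩ f).card ≤ 1)
    (hdeg : ∀ v ∈ H.verts, H.degree v ≤ 2) {E : Finset α} {a b : α} (hE : E ∈ H.edges)
    (ha : a ∈ E) (hb : b ∈ E) (hab : a ≠ b) :
    H.IsInfectionSetM 1 {a, b} := by
  have habE : ({a, b} : Finset α) ⊆ E :=
    Finset.insert_subset ha (Finset.singleton_subset_iff.mpr hb)
  have hEinf : ∀ x ∈ E, H.InfectedFromM 1 {a, b} x := by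
    intro x hx
    refine .spread (by rw [Finset.card_pair hab]; omega) habE hE (fun y hy => .init hy) ?_ hx
    rintro u - huE ⟨E', hE', habuE'⟩
    have hEE' : E ≠ E' := by
      rintro rfl
      exact huE (habuE' (by simp))
    have h2 : 2 ≤ (E ∩ E').card := by
      rw [← Finset.card_pair hab]
      exact Finset.card_le_card (Finset.subset_inter habE (Finset.union_subset_left habuE'))
    have := hlin E hE E' hE' hEE'
    omega
  exact ⟨habE.trans (H.edge_sub E hE),
    fun v hv => infectedFromM_of_infected_edge hconn hdeg hE ha hEinf hv⟩

lemma eq_of_infectedFromM_singleton_of_degree_ne_one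
    (hlin : ∀ e ∈ H.edges, ∀ f ∈ H.edges, e ≠ f → (e ∩ f).card ≤ 1)
    (hsize : ∀ e ∈ H.edges, 2 ≤ e.card) {w : α} (hdw : H.degree w ≠ 1) {v : α}
    (h : H.InfectedFromM 1 {w} v) : v = w := by
  induction h with
  | init hv => simpa using hv
  | @spread A E _ hcard hAE hE _ _ _ ihA ihblock =>
    obtain ⟨a, ha⟩ := Finset.card_pos.mp hcard
    have hAw : A = {w} := Finset.eq_singleton_iff_unique_mem.mpr
      ⟨ihA a ha ▸ ha, fun y hy => ihA y hy⟩
    subst hAw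
    have hwE : w ∈ E := hAE (Finset.mem_singleton_self w)
    have hEw : E ∈ H.edges.filter (w ∈ ·) := Finset.mem_filter.mpr ⟨hE, hwE⟩
    have hdeg : 1 < H.degree w := by
      have : 0 < H.degree w := Finset.card_pos.mpr ⟨E, hEw⟩
      omega
    obtain ⟨F, hFw, hFE⟩ := Finset.exists_mem_ne hdeg E
    obtain ⟨hF, hwF⟩ := Finset.mem_filter.mp hFw
    obtain ⟨u, hu⟩ := sdiff_nonempty_of_linear hlin hsize hE hF (Ne.symm hFE)
    obtain ⟨huF, huE⟩ := Finset.mem_sdiff.mp hu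
    have huw : u = w := ihblock u (H.edge_sub F hF huF) huE
      ⟨F, hF, Finset.union_subset (Finset.singleton_subset_iff.mpr hwF)
        (Finset.singleton_subset_iff.mpr huF)⟩
    exact absurd (huw ▸ hwE) huE

end FinHypergraph

open FinHypergraph in
theorem infectionNumber_linear_maxDegree_two_general
    {α : Type*} [DecidableEq α] (H : FinHypergraph α)
    (hconn : H.Connected)
    (hlin : ∀ e ∈ H.edges, ∀ f ∈ H.edges, e ≠ f → (e ∩ f).card ≤ 1)
    (hdeg : ∀ v ∈ H.verts, H.degree v ≤ 2)
    (hne : H.edges.Nonempty)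
    (hsize : ∀ e ∈ H.edges, 2 ≤ e.card) :
    H.infectionNumber ≤ 2 ∧
      (H.infectionNumber = 1 ↔ ∃ v ∈ H.verts, H.degree v = 1) := by
  obtain ⟨E, hE⟩ := hne
  obtain ⟨a, ha, b, hb, hab⟩ := Finset.one_lt_card.mp (hsize E hE)
  have hpair := isInfectionSetM_pair hconn hlin hdeg hE ha hb hab
  have hpos : 0 < H.infectionNumber := infectionNumberM_pos one_pos hpair (H.edge_sub E hE ha)
  refine ⟨(infectionNumberM_le_card hpair).trans (Finset.card_pair hab).le, fun h1 => ?_,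
    fun ⟨w, hw, hdw⟩ => ?_⟩
  · obtain ⟨W, hW, hcard⟩ := exists_isInfectionSetM_card_eq hpair
    obtain ⟨w, rfl⟩ := Finset.card_eq_one.mp (hcard.trans h1)
    refine ⟨w, hW.1 (Finset.mem_singleton_self w), by_contra fun hdw => hab ?_⟩
    have hcollapse := fun v hv => eq_of_infectedFromM_singleton_of_degree_ne_one hlin hsize hdw
      (hW.2 v hv)
    rw [hcollapse a (H.edge_sub E hE ha), hcollapse b (H.edge_sub E hE hb)]
  · have := infectionNumberM_le_card (isInfectionSetM_singleton_of_degree_eq_one hconn hdeg hw hdw)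
    exact le_antisymm (this.trans_eq (Finset.card_singleton w)) hpos

/-- A reduced, connected, linear hypergraph with maximum degree
at most `2`, at least one edge, and all edges of size at least `2`, has
infection number at most `2`; and it equals `1` iff there is a vertex of
degree `1`. -/
theorem infectionNumber_linear_maxDegree_two
    {α : Type*} [DecidableEq α] (H : FinHypergraph α)
    (hred : H.Reduced) (hconn : H.Connected)
    (hlin : ∀ e ∈ H.edges, ∀ f ∈ H.edges, e ≠ f → (e ∩ f).card ≤ 1)
    (hdeg : ∀ v ∈ H.verts, H.degree v ≤ 2)
    (hne : H.edges.Nonempty)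
    (hsize : ∀ e ∈ H.edges, 2 ≤ e.card) :
    H.infectionNumber ≤ 2 ∧
      (H.infectionNumber = 1 ↔ ∃ v ∈ H.verts, H.degree v = 1) :=
  infectionNumber_linear_maxDegree_two_general H hconn hlin hdeg hne hsize
end

section
/- If n ≥ 2k−1 ≥ 3, the (k−1)-tight k-uniform cycle C^(k)_n(k−1), whose edges are all cyclic intervals of length k in {1,...,n}, has infection number 2. -/
/-- The `(k-1)`-tight `k`-uniform cycle `C^(k)_n(k-1)`: vertex set `{0,…,n-1}`
viewed cyclically, with edges all cyclic intervals `{j, j+1, …, j+k-1}` (mod `n`). -/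
def cyclicIntervalHypergraph (n k : ℕ) : FinHypergraph ℕ where
  verts := Finset.range n
  edges := (Finset.range n).image
    (fun j => (Finset.range k).image (fun a => (j + a) % n))
  edge_sub := by
    intro e he
    simp only [Finset.mem_image, Finset.mem_range] at he
    obtain ⟨j, hj, rfl⟩ := he
    intro x hx
    simp only [Finset.mem_image, Finset.mem_range] at hx
    obtain ⟨a, _, rfl⟩ := hx
    exact Finset.mem_range.mpr (Nat.mod_lt _ (Nat.lt_of_le_of_lt (Nat.zero_le j) hj))

/-!
Write `I j` for the edge `cyclicInterval n k j = {j, …, j + k - 1}`. The pair `{0, k - 1}`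
infects the whole cycle: since `n ≥ 2k - 1`, `I 0` is the only edge containing both vertices,
so it gets infected, and then the infection slides around the cycle one interval at a time.
Conversely, a singleton `{w}` is closed under the infection rule, because every edge through `w`
misses some vertex adjacent to `w`; so no set of at most one vertex infects a hypergraph with
two vertices.
-/

open Finset

namespace FinHypergraph

variable {α : Type*} [DecidableEq α] {H : FinHypergraph α} {m : ℕ} {W : Finset α}

def IsInfectionClosed (H : FinHypergraph α) (m : ℕ) (S : Finset α) : Prop :=
  ∀ A E : Finset α, m ≤ #A → A ⊆ S → E ∈ H.edges → A ⊆ E →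
    (∀ u ∈ H.verts, u ∉ E → (∃ E' ∈ H.edges, A ∪ {u} ⊆ E') → u ∈ S) → E ⊆ S

theorem InfectedFromM.mem_of_isInfectionClosed {S : Finset α} {v : α}
    (hS : H.IsInfectionClosed m S) (hWS : W ⊆ S) (h : H.InfectedFromM m W v) : v ∈ S := by
  induction h with
  | init hv => exact hWS hv
  | spread hcard hAE hE _ _ hv ihA ihblock =>
    exact hS _ _ hcard ihA hE hAE ihblock hv

theorem InfectedFromM.of_forall_edge {A E : Finset α} (hm : m ≤ #A) (hAE : A ⊆ E)
    (hE : E ∈ H.edges) (hA : ∀ a ∈ A, H.InfectedFromM m W a)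
    (hblock : ∀ E' ∈ H.edges, A ⊆ E' → ∀ u ∈ E', u ∉ E → H.InfectedFromM m W u) :
    ∀ v ∈ E, H.InfectedFromM m W v := fun _ hv =>
  .spread hm hAE hE hA (fun u _ huE ⟨E', hE', hsub⟩ =>
    hblock E' hE' (subset_union_left.trans hsub) u (hsub (by simp)) huE) hv

theorem two_le_card_of_isInfectionSetM (hS : ∀ w, H.IsInfectionClosed m {w})
    (hV : 1 < #H.verts) (hW : H.IsInfectionSetM m W) : 2 ≤ #W := by
  obtain ⟨a, ha, b, hb, hab⟩ := one_lt_card.mp hV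
  have : Nonempty α := ⟨a⟩
  by_contra! hW1
  obtain ⟨w, hWw⟩ := card_le_one_iff_subset_singleton.mp (Nat.le_of_lt_succ hW1)
  have hmem : ∀ v ∈ H.verts, v = w := fun v hv =>
    mem_singleton.mp ((hW.2 v hv).mem_of_isInfectionClosed (hS w) hWw)
  exact hab ((hmem a ha).trans (hmem b hb).symm)

theorem infectionNumberM_eq_card (hW : H.IsInfectionSetM m W)
    (hmin : ∀ W', H.IsInfectionSetM m W' → #W ≤ #W') : H.infectionNumberM m = #W :=
  le_antisymm (Nat.sInf_le ⟨W, hW, rfl⟩)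
    (le_csInf ⟨_, W, hW, rfl⟩ fun _ ⟨W', hW', hc⟩ => hc ▸ hmin W' hW')

end FinHypergraph

def cyclicInterval (n k j : ℕ) : Finset ℕ := (range k).image fun a => (j + a) % n

theorem mem_cyclicInterval {n k j x : ℕ} (hj : j < n) (hk : k ≤ n) :
    x ∈ cyclicInterval n k j ↔ x < n ∧ (j ≤ x ∧ x < j + k ∨ x + n < j + k) := by
  simp only [cyclicInterval, mem_image, mem_range]
  constructor
  · rintro ⟨a, ha, rfl⟩
    rcases lt_or_ge (j + a) n with h | h
    · rw [Nat.mod_eq_of_lt h]; omega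
    · rw [Nat.mod_eq_sub_mod h, Nat.mod_eq_of_lt (by omega)]; omega
  · rintro ⟨hx, hjx | hjx⟩
    · exact ⟨x - j, by omega, by rw [Nat.add_sub_cancel' hjx.1, Nat.mod_eq_of_lt hx]⟩
    · refine ⟨x + n - j, by omega, ?_⟩
      rw [Nat.add_sub_cancel' (by omega), Nat.add_mod_right, Nat.mod_eq_of_lt hx]

theorem Nat.exists_lt_eq_or_add_eq {x n : ℕ} (h : x < 2 * n) : ∃ y < n, y = x ∨ y + n = x := by
  rcases lt_or_ge x n with hx | hx
  · exact ⟨x, hx, .inl rfl⟩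
  · exact ⟨x - n, by omega, .inr (by omega)⟩

namespace cyclicIntervalHypergraph

theorem mem_edges {n k : ℕ} {E : Finset ℕ} :
    E ∈ (cyclicIntervalHypergraph n k).edges ↔ ∃ j < n, cyclicInterval n k j = E := by
  simp [cyclicIntervalHypergraph, cyclicInterval]

theorem isInfectionClosed_singleton {n k : ℕ} (hk : 2 ≤ k) (hkn : k < n) (w : ℕ) :
    (cyclicIntervalHypergraph n k).IsInfectionClosed 1 {w} := by
  intro A E hA hAw hE hAE hblock
  obtain rfl : A = {w} := (subset_singleton_iff.mp hAw).resolve_left (by rintro rfl; simp at hA)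
  obtain ⟨j, hj, rfl⟩ := mem_edges.mp hE
  have hwE := hAE (mem_singleton_self w)
  -- a neighbour of `w` outside the edge: just before `w` if `w` starts the edge, else just after it
  obtain ⟨u, hun, huE, j', hj', hwj', huj'⟩ : ∃ u < n, u ∉ cyclicInterval n k j ∧
      ∃ j' < n, w ∈ cyclicInterval n k j' ∧ u ∈ cyclicInterval n k j' := by
    rw [mem_cyclicInterval hj hkn.le] at hwE
    by_cases hwj : w = j
    · obtain ⟨u, hun, hu⟩ := Nat.exists_lt_eq_or_add_eq (show j + n - 1 < 2 * n by omega)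
      refine ⟨u, hun, ?_, u, hun, ?_, ?_⟩ <;> simp only [mem_cyclicInterval hj hkn.le,
        mem_cyclicInterval hun hkn.le] <;> omega
    · obtain ⟨u, hun, hu⟩ := Nat.exists_lt_eq_or_add_eq (show j + k < 2 * n by omega)
      refine ⟨u, hun, ?_, w, hwE.1, ?_, ?_⟩ <;> simp only [mem_cyclicInterval hj hkn.le,
        mem_cyclicInterval hwE.1 hkn.le] <;> omega
  have huw := hblock u (mem_range.mpr hun) huE
    ⟨_, mem_edges.mpr ⟨j', hj', rfl⟩, union_subset (singleton_subset_iff.mpr hwj')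
      (singleton_subset_iff.mpr huj')⟩
  exact absurd (mem_singleton.mp huw ▸ hwE) huE

theorem infectedFrom_of_mem_cyclicInterval_zero {n k v : ℕ} (hk : 2 ≤ k) (hn : 2 * k - 1 ≤ n)
    (hv : v ∈ cyclicInterval n k 0) :
    (cyclicIntervalHypergraph n k).InfectedFrom {0, k - 1} v := by
  have hn0 : 0 < n := by omega
  have hkn : k ≤ n := by omega
  refine FinHypergraph.InfectedFromM.of_forall_edge (A := {0, k - 1}) ?_ ?_
    (mem_edges.mpr ⟨0, hn0, rfl⟩) (fun a ha => .init ha) ?_ v hv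
  · exact card_pos.mpr (insert_nonempty _ _)
  · intro x hx
    simp only [mem_insert, mem_singleton] at hx
    rw [mem_cyclicInterval hn0 hkn]
    omega
  · rintro _ hE' hAE' u hu huE
    obtain ⟨j, hj, rfl⟩ := mem_edges.mp hE'
    have h0 := hAE' (mem_insert_self _ _)
    have h1 := hAE' (mem_insert_of_mem (mem_singleton_self _))
    simp only [mem_cyclicInterval hj hkn, mem_cyclicInterval hn0 hkn] at h0 h1 hu huE
    omega

theorem infectedFrom_of_mem_cyclicInterval_succ {n k s : ℕ} {W : Finset ℕ} (hk : 2 ≤ k)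
    (hn : 2 * k - 1 ≤ n) (hs : s + 1 < n)
    (hI : ∀ v ∈ cyclicInterval n k s, (cyclicIntervalHypergraph n k).InfectedFrom W v) :
    ∀ v ∈ cyclicInterval n k (s + 1), (cyclicIntervalHypergraph n k).InfectedFrom W v := by
  have hkn : k ≤ n := by omega
  -- `s + 1` and the last vertex `y` of `I s` lie only in the edges `I s` and `I (s + 1)`
  obtain ⟨y, hyn, hy⟩ := Nat.exists_lt_eq_or_add_eq (show s + k - 1 < 2 * n by omega)
  have hmem : ∀ x ∈ ({s + 1, y} : Finset ℕ), x ∈ cyclicInterval n k s := by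
    intro x hx
    simp only [mem_insert, mem_singleton] at hx
    rw [mem_cyclicInterval (by omega) hkn]
    omega
  refine FinHypergraph.InfectedFromM.of_forall_edge (card_pos.mpr (insert_nonempty _ _)) ?_
    (mem_edges.mpr ⟨s + 1, hs, rfl⟩) (fun a ha => hI a (hmem a ha)) ?_
  · intro x hx
    simp only [mem_insert, mem_singleton] at hx
    rw [mem_cyclicInterval hs hkn]
    omega
  · rintro _ hE' hAE' u hu huE
    obtain ⟨j, hj, rfl⟩ := mem_edges.mp hE'
    have h0 := hAE' (mem_insert_self _ _)
    have h1 := hAE' (mem_insert_of_mem (mem_singleton_self _))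
    refine hI u ?_
    simp only [mem_cyclicInterval hj hkn, mem_cyclicInterval hs hkn,
      mem_cyclicInterval (show s < n by omega) hkn] at h0 h1 hu huE ⊢
    omega

theorem isInfectionSet_pair {n k : ℕ} (hk : 2 ≤ k) (hn : 2 * k - 1 ≤ n) :
    (cyclicIntervalHypergraph n k).IsInfectionSet {0, k - 1} := by
  have hI : ∀ t < n, ∀ v ∈ cyclicInterval n k t,
      (cyclicIntervalHypergraph n k).InfectedFrom {0, k - 1} v := by
    intro t ht
    induction t with
    | zero => exact fun v hv => infectedFrom_of_mem_cyclicInterval_zero hk hn hv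
    | succ t ih => exact infectedFrom_of_mem_cyclicInterval_succ hk hn ht (ih (by omega))
  refine ⟨fun x hx => ?_, fun v hv => hI v (mem_range.mp hv) v ?_⟩
  · simp only [mem_insert, mem_singleton] at hx
    exact mem_range.mpr (by omega)
  · rw [mem_cyclicInterval (mem_range.mp hv) (by omega)]
    exact ⟨mem_range.mp hv, by omega⟩

end cyclicIntervalHypergraph

/-- For `n ≥ 2k - 1 ≥ 3`, the cycle `C^(k)_n(k-1)` has infection
number `2`. -/
theorem infectionNumber_cyclicInterval (n k : ℕ)
    (hk : 3 ≤ 2 * k - 1) (hn : 2 * k - 1 ≤ n) :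
    (cyclicIntervalHypergraph n k).infectionNumber = 2 := by
  have hk2 : 2 ≤ k := by omega
  have hpair : #({0, k - 1} : Finset ℕ) = 2 := card_pair (by omega)
  have hverts : 1 < #(cyclicIntervalHypergraph n k).verts := by
    simp only [cyclicIntervalHypergraph, card_range]
    omega
  rw [← hpair]
  exact FinHypergraph.infectionNumberM_eq_card
    (cyclicIntervalHypergraph.isInfectionSet_pair hk2 hn) fun _ hW =>
      hpair ▸ FinHypergraph.two_le_card_of_isInfectionSetM
        (cyclicIntervalHypergraph.isInfectionClosed_singleton hk2 (by omega)) hverts hW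
end
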